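/- arXiv:1503.04406 — 2 statements merged into one kernel-verified Lean document; each statement's English description precedes it below -/
import Mathlib

section
/- Let G be a looped simple graph with at least one edge incident to each of two distinct vertices v, w. If ρ and σ are two elements of the isotropic matroid M[IAS(G)] that are in series (no basis excludes both, and neither is a coloop), then they are the two non-loop elements of the vertex triple of an isolated vertex of G. Moreover, no element of M[IAS(G)] is a coloop. -/
/-- Columns of `IAS(G) = (I | A | A+I)` over GF(2). -/
def iasCol {V : Type} [DecidableEq V] (A : Matrix V V (ZMod 2)) :
    V ⊕ V ⊕ V → V → ZMod 2
  | Sum.inl v => fun w => if w = v then 1 else 0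
  | Sum.inr (Sum.inl v) => fun w => A w v
  | Sum.inr (Sum.inr v) => fun w => A w v + (if w = v then 1 else 0)

/-- Independence in `M[IAS(G)]`. -/
def iasIndep {V : Type} [DecidableEq V] (A : Matrix V V (ZMod 2))
    (S : Set (V ⊕ V ⊕ V)) : Prop :=
  LinearIndependent (ZMod 2) (S.restrict (iasCol A))

/-- A basis of `M[IAS(G)]` is a maximal independent set. -/
def iasBasis {V : Type} [DecidableEq V] (A : Matrix V V (ZMod 2))
    (Bs : Set (V ⊕ V ⊕ V)) : Prop :=
  iasIndep A Bs ∧ ∀ B', Bs ⊆ B' → iasIndep A B' → B' = Bs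

/-- A coloop is an element contained in every basis. -/
def iasColoop {V : Type} [DecidableEq V] (A : Matrix V V (ZMod 2))
    (x : V ⊕ V ⊕ V) : Prop :=
  ∀ Bs, iasBasis A Bs → x ∈ Bs

/-!
The columns of the elements `φ(s)` form the identity matrix, so a transversal `b` (one element
`b s ∈ τ(s)` for each vertex `s`) whose columns generate every unit vector is a basis, and an element
`y` lies in it iff `b` picks `y` in the triple of `y`. Transversals with at most two entries
outside `{φ(s)}` suffice. The basis `{φ(s)}` shows that no `χ`, `ψ` is a coloop and that every
series pair contains some `φ(u)`. Replacing `φ(u)` by the element `c(u) = diagOneElem A u` of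
`τ(u)` whose column has `u`-entry `1` shows that `φ(u)` is no coloop and that its partner is
`c(u)` or some `φ(t)`. Replacing `φ(u), φ(t)` by `c(u), c(t)` when `t, u` are not adjacent, and by
`d(u), c(t)` when they are (`d(u) = diagZeroElem A u` the third element of `τ(u)`), excludes
`φ(t)`; the latter basis also excludes `c(u)` unless `u` is isolated.
-/

theorem ZMod.eq_one_of_ne_zero {x : ZMod 2} (hx : x ≠ 0) : x = 1 := by
  revert x; decide

theorem Pi.single_one_mem_of_mem {V K : Type*} [Fintype V] [DecidableEq V] [Ring K]
    {p : Submodule K (V → K)} {g : V → K} {a : V} (hg : g ∈ p) (ha : g a = 1)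
    (h : ∀ s, s ≠ a → g s ≠ 0 → Pi.single s 1 ∈ p) : Pi.single a 1 ∈ p := by
  have hsplit : Pi.single a 1 = g - ∑ s ∈ Finset.univ.erase a, g s • Pi.single s (1 : K) := by
    have := Finset.add_sum_erase _ (fun s => g s • Pi.single s (1 : K)) (Finset.mem_univ a)
    rw [ha, one_smul, ← pi_eq_sum_univ'] at this
    exact eq_sub_of_add_eq this
  rw [hsplit]
  refine p.sub_mem hg (p.sum_mem fun s hs => ?_)
  by_cases hgs : g s = 0
  · simp [hgs]
  · exact p.smul_mem _ (h s (Finset.ne_of_mem_erase hs) hgs)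

theorem Pi.single_one_mem_of_triangular {V K : Type*} [Fintype V] [DecidableEq V] [Ring K]
    {p : Submodule K (V → K)} {g h : V → K} {a b : V} (hg : g ∈ p) (hh : h ∈ p)
    (hga : g a = 1) (hgb : g b = 0) (hhb : h b = 1)
    (hp : ∀ s, s ≠ a → s ≠ b → Pi.single s 1 ∈ p) (s : V) : Pi.single s 1 ∈ p := by
  have hpa : Pi.single a 1 ∈ p := Pi.single_one_mem_of_mem hg hga fun s hsa hgs =>
    hp s hsa (by rintro rfl; exact hgs hgb)
  have hpb : Pi.single b 1 ∈ p := Pi.single_one_mem_of_mem hh hhb fun s hsb _ => by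
    by_cases hsa : s = a
    · exact hsa ▸ hpa
    · exact hp s hsa hsb
  by_cases hsa : s = a
  · exact hsa ▸ hpa
  by_cases hsb : s = b
  · exact hsb ▸ hpb
  exact hp s hsa hsb

section Transversal

variable {V : Type}

def tripleVertex : V ⊕ V ⊕ V → V :=
  Sum.elim id (Sum.elim id id)

def IsTransversal (b : V → V ⊕ V ⊕ V) : Prop :=
  ∀ s, tripleVertex (b s) = s

theorem isTransversal_inl : IsTransversal (Sum.inl : V → V ⊕ V ⊕ V) :=
  fun _ => rfl

theorem IsTransversal.update [DecidableEq V] {b : V → V ⊕ V ⊕ V} (hb : IsTransversal b)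
    {u : V} {x : V ⊕ V ⊕ V} (hx : tripleVertex x = u) :
    IsTransversal (Function.update b u x) := by
  intro s
  by_cases hs : s = u
  · subst hs; simpa using hx
  · simpa [hs] using hb s

theorem IsTransversal.mem_range_iff {b : V → V ⊕ V ⊕ V} (hb : IsTransversal b)
    {y : V ⊕ V ⊕ V} : y ∈ Set.range b ↔ b (tripleVertex y) = y :=
  ⟨by rintro ⟨s, rfl⟩; rw [hb s], fun h => ⟨_, h⟩⟩

theorem IsTransversal.apply_eq_of_forall_basis [DecidableEq V] {A : Matrix V V (ZMod 2)}
    {b : V → V ⊕ V ⊕ V} (hb : IsTransversal b) (hB : iasBasis A (Set.range b))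
    {ρ σ : V ⊕ V ⊕ V} (hser : ∀ Bs, iasBasis A Bs → ρ ∈ Bs ∨ σ ∈ Bs)
    (hρ : b (tripleVertex ρ) ≠ ρ) : b (tripleVertex σ) = σ :=
  hb.mem_range_iff.mp ((hser _ hB).resolve_left fun h => hρ (hb.mem_range_iff.mp h))

end Transversal

section Columns

variable {V : Type} (A : Matrix V V (ZMod 2))

theorem iasCol_inl [DecidableEq V] (s : V) : iasCol A (Sum.inl s) = Pi.single s 1 := by
  funext w
  simp [iasCol, Pi.single_apply]

/- The two elements of `τ(u) \ {φ(u)}`: the `u`-entries of the columns of `χ(u)` and `ψ(u)` are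
`A u u` and `A u u + 1`, so exactly one of them has `u`-entry `1`. -/

def diagOneElem (u : V) : V ⊕ V ⊕ V :=
  if A u u = 0 then Sum.inr (Sum.inr u) else Sum.inr (Sum.inl u)

def diagZeroElem (u : V) : V ⊕ V ⊕ V :=
  if A u u = 0 then Sum.inr (Sum.inl u) else Sum.inr (Sum.inr u)

theorem iasCol_diagOneElem [DecidableEq V] (u w : V) :
    iasCol A (diagOneElem A u) w = if w = u then 1 else A w u := by
  by_cases hw : w = u
  · subst hw
    by_cases h : A w w = 0
    · simp [diagOneElem, iasCol, h]
    · rw [diagOneElem, if_neg h]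
      simpa [iasCol] using ZMod.eq_one_of_ne_zero h
  · by_cases h : A u u = 0 <;> simp [diagOneElem, iasCol, h, hw]

theorem iasCol_diagZeroElem [DecidableEq V] (u w : V) :
    iasCol A (diagZeroElem A u) w = if w = u then 0 else A w u := by
  by_cases hw : w = u
  · subst hw
    by_cases h : A w w = 0
    · simp [diagZeroElem, iasCol, h]
    · rw [diagZeroElem, if_neg h]
      simp only [iasCol, if_pos, ZMod.eq_one_of_ne_zero h]
      decide
  · by_cases h : A u u = 0 <;> simp [diagZeroElem, iasCol, h, hw]

theorem tripleVertex_diagOneElem (u : V) : tripleVertex (diagOneElem A u) = u := by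
  unfold diagOneElem; split_ifs <;> rfl

theorem tripleVertex_diagZeroElem (u : V) : tripleVertex (diagZeroElem A u) = u := by
  unfold diagZeroElem; split_ifs <;> rfl

theorem diagOneElem_ne_inl (u s : V) : diagOneElem A u ≠ Sum.inl s := by
  unfold diagOneElem; split_ifs <;> simp

theorem diagZeroElem_ne_inl (u s : V) : diagZeroElem A u ≠ Sum.inl s := by
  unfold diagZeroElem; split_ifs <;> simp

theorem diagZeroElem_ne_diagOneElem (u : V) : diagZeroElem A u ≠ diagOneElem A u := by
  unfold diagZeroElem diagOneElem; split_ifs <;> simp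

end Columns

section Bases

variable {V : Type} [Fintype V] [DecidableEq V] (A : Matrix V V (ZMod 2))

theorem iasBasis_range {b : V → V ⊕ V ⊕ V}
    (hb : ∀ s, Pi.single s 1 ∈ Submodule.span (ZMod 2) (Set.range (iasCol A ∘ b))) :
    iasBasis A (Set.range b) := by
  have hspan : Submodule.span (ZMod 2) (Set.range (iasCol A ∘ b)) = ⊤ := by
    rw [eq_top_iff, ← (Pi.basisFun (ZMod 2) V).span_eq, Submodule.span_le]
    rintro _ ⟨s, rfl⟩
    simpa using hb s
  have hli : LinearIndependent (ZMod 2) (iasCol A ∘ b) :=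
    linearIndependent_of_top_le_span_of_card_eq_finrank hspan.ge
      (Module.finrank_fintype_fun_eq_card (ZMod 2)).symm
  have hindep : iasIndep A (Set.range b) :=
    (linearIndepOn_range_iff hli.injective.of_comp _).mpr hli
  refine ⟨hindep, fun B hbB hB => (hbB.antisymm' fun y hy => ?_)⟩
  by_contra hyb
  have hins : LinearIndepOn (ZMod 2) (iasCol A) (insert y (Set.range b)) :=
    LinearIndepOn.mono hB (Set.insert_subset hy hbB)
  refine ((linearIndepOn_insert hyb).mp hins).2 ?_
  rw [← Set.range_comp, hspan]
  trivial

theorem iasBasis_range_inl : iasBasis A (Set.range Sum.inl) :=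
  iasBasis_range A fun s => Submodule.subset_span ⟨s, iasCol_inl A s⟩

theorem iasBasis_range_update {u : V} {x : V ⊕ V ⊕ V} (hx : iasCol A x u = 1) :
    iasBasis A (Set.range (Function.update Sum.inl u x)) := by
  refine iasBasis_range A fun s => ?_
  set P := Submodule.span (ZMod 2) (Set.range (iasCol A ∘ Function.update Sum.inl u x))
  have hcol : ∀ s, iasCol A (Function.update Sum.inl u x s) ∈ P :=
    fun s => Submodule.subset_span ⟨s, rfl⟩
  have hsingle : ∀ s, s ≠ u → Pi.single s 1 ∈ P := fun s hs => by
    simpa [hs, iasCol_inl] using hcol s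
  by_cases hs : s = u
  · subst hs
    exact Pi.single_one_mem_of_mem (by simpa using hcol s) hx fun t ht _ => hsingle t ht
  · exact hsingle s hs

theorem iasBasis_range_update_update {u t : V} (hut : u ≠ t) {x y : V ⊕ V ⊕ V}
    (hxy : ∀ p : Submodule (ZMod 2) (V → ZMod 2), iasCol A x ∈ p → iasCol A y ∈ p →
      (∀ s, s ≠ u → s ≠ t → Pi.single s 1 ∈ p) → ∀ s, Pi.single s 1 ∈ p) :
    iasBasis A (Set.range (Function.update (Function.update Sum.inl u x) t y)) := by
  set b := Function.update (Function.update Sum.inl u x) t y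
  have hcol : ∀ s, iasCol A (b s) ∈ Submodule.span (ZMod 2) (Set.range (iasCol A ∘ b)) :=
    fun s => Submodule.subset_span ⟨s, rfl⟩
  refine iasBasis_range A (hxy _ ?_ ?_ fun s hsu hst => ?_)
  · simpa [b, hut] using hcol u
  · simpa [b] using hcol t
  · simpa [b, hsu, hst, iasCol_inl] using hcol s

theorem iasBasis_update_diagOneElem (u : V) :
    iasBasis A (Set.range (Function.update Sum.inl u (diagOneElem A u))) :=
  iasBasis_range_update A (by simp [iasCol_diagOneElem])

theorem iasBasis_update_diagZeroElem_diagOneElem (hA : A.IsSymm) {u t : V} (htu : t ≠ u)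
    (h : A t u = 1) :
    iasBasis A (Set.range (Function.update
      (Function.update Sum.inl u (diagZeroElem A u)) t (diagOneElem A t))) :=
  iasBasis_range_update_update A htu.symm fun _ hx hy hp =>
    Pi.single_one_mem_of_triangular hx hy (a := t) (b := u)
      (by simp [iasCol_diagZeroElem, htu, h]) (by simp [iasCol_diagZeroElem])
      (by simp [iasCol_diagOneElem, htu.symm, hA.apply t u, h]) fun s hst hsu => hp s hsu hst

theorem iasBasis_update_diagOneElem_diagOneElem {u t : V} (htu : t ≠ u) (h : A t u = 0) :
    iasBasis A (Set.range (Function.update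
      (Function.update Sum.inl u (diagOneElem A u)) t (diagOneElem A t))) :=
  iasBasis_range_update_update A htu.symm fun _ hx hy hp =>
    Pi.single_one_mem_of_triangular hx hy (a := u) (b := t)
      (by simp [iasCol_diagOneElem]) (by simp [iasCol_diagOneElem, htu, h])
      (by simp [iasCol_diagOneElem]) hp

theorem not_iasColoop (x : V ⊕ V ⊕ V) : ¬ iasColoop A x := by
  intro hx
  cases x with
  | inl u =>
    have h := (isTransversal_inl.update (tripleVertex_diagOneElem A u)).mem_range_iff.mp
      (hx _ (iasBasis_update_diagOneElem A u))
    exact diagOneElem_ne_inl A u u (by simpa [tripleVertex] using h)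
  | inr y =>
    obtain ⟨s, hs⟩ := hx _ (iasBasis_range_inl A)
    exact Sum.inl_ne_inr hs

theorem isolated_and_eq_diagOneElem_of_forall_basis {A : Matrix V V (ZMod 2)} (hA : A.IsSymm)
    {u : V} {σ : V ⊕ V ⊕ V} (hser : ∀ Bs, iasBasis A Bs → Sum.inl u ∈ Bs ∨ σ ∈ Bs) :
    (∀ z, z ≠ u → A z u = 0) ∧ σ = diagOneElem A u := by
  have hσ := (isTransversal_inl.update (tripleVertex_diagOneElem A u)).apply_eq_of_forall_basis
    (iasBasis_update_diagOneElem A u) hser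
    (by simpa [tripleVertex] using diagOneElem_ne_inl A u u)
  by_cases htu : tripleVertex σ = u
  · have hσu : σ = diagOneElem A u := by rw [← hσ, htu, Function.update_self]
    refine ⟨fun z hzu => by_contra fun hz => ?_, hσu⟩
    have h := ((isTransversal_inl.update (tripleVertex_diagZeroElem A u)).update
      (tripleVertex_diagOneElem A z)).apply_eq_of_forall_basis
      (iasBasis_update_diagZeroElem_diagOneElem A hA hzu (ZMod.eq_one_of_ne_zero hz)) hser
      (by simpa [tripleVertex, hzu.symm] using diagZeroElem_ne_inl A u u)
    rw [htu, Function.update_of_ne hzu.symm, Function.update_self, hσu] at h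
    exact diagZeroElem_ne_diagOneElem A u h
  · exfalso
    set t := tripleVertex σ
    have hσt : σ = Sum.inl t := by rw [← hσ, Function.update_of_ne htu]
    obtain ⟨x, hxu, hx, hB⟩ : ∃ x, tripleVertex x = u ∧ x ≠ Sum.inl u ∧ iasBasis A
        (Set.range (Function.update (Function.update Sum.inl u x) t (diagOneElem A t))) := by
      by_cases hadj : A t u = 0
      · exact ⟨_, tripleVertex_diagOneElem A u, diagOneElem_ne_inl A u u,
          iasBasis_update_diagOneElem_diagOneElem A htu hadj⟩
      · exact ⟨_, tripleVertex_diagZeroElem A u, diagZeroElem_ne_inl A u u,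
          iasBasis_update_diagZeroElem_diagOneElem A hA htu (ZMod.eq_one_of_ne_zero hadj)⟩
    have h := ((isTransversal_inl.update hxu).update
      (tripleVertex_diagOneElem A t)).apply_eq_of_forall_basis hB hser
      (by simpa [tripleVertex, Ne.symm htu] using hx)
    rw [Function.update_self] at h
    exact diagOneElem_ne_inl A t t (h.trans hσt)

end Bases

theorem series_elements_isolated_vertex_general {V : Type} [Fintype V] [DecidableEq V]
    (A : Matrix V V (ZMod 2)) (hA : A.IsSymm) :
    (∀ x : V ⊕ V ⊕ V, ¬ iasColoop A x) ∧
    (∀ ρ σ : V ⊕ V ⊕ V, ρ ≠ σ →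
      ¬ iasColoop A ρ → ¬ iasColoop A σ →
      (∀ Bs, iasBasis A Bs → ρ ∈ Bs ∨ σ ∈ Bs) →
      ∃ u : V, (∀ z, z ≠ u → A z u = 0) ∧
        ({ρ, σ} : Set (V ⊕ V ⊕ V)) =
          {Sum.inl u, if A u u = 0 then Sum.inr (Sum.inr u) else Sum.inr (Sum.inl u)}) := by
  refine ⟨not_iasColoop A, fun ρ σ _ _ _ hser => ?_⟩
  rcases hser _ (iasBasis_range_inl A) with ⟨u, rfl⟩ | ⟨u, rfl⟩
  · obtain ⟨hiso, rfl⟩ := isolated_and_eq_diagOneElem_of_forall_basis hA hser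
    exact ⟨u, hiso, rfl⟩
  · obtain ⟨hiso, rfl⟩ :=
      isolated_and_eq_diagOneElem_of_forall_basis hA fun Bs hBs => (hser Bs hBs).symm
    exact ⟨u, hiso, Set.pair_comm _ _⟩

/-- Let `G` be a looped simple graph having two distinct vertices `v, w` each incident
with an edge.  Then no element of `M[IAS(G)]` is a coloop; and if two distinct non-coloop
elements `ρ, σ` are in series (no basis excludes both), then they are the two non-loop
elements of the vertex triple of an isolated vertex of `G` (namely `φ(u)` and `ψ(u)` if
`u` is unlooped, `φ(u)` and `χ(u)` if `u` is looped). -/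
theorem series_elements_isolated_vertex {V : Type} [Fintype V] [DecidableEq V]
    (A : Matrix V V (ZMod 2)) (hA : A.IsSymm)
    (v w : V) (hvw : v ≠ w)
    (hv : ∃ u, u ≠ v ∧ A u v = 1) (hw : ∃ u, u ≠ w ∧ A u w = 1) :
    (∀ x : V ⊕ V ⊕ V, ¬ iasColoop A x) ∧
    (∀ ρ σ : V ⊕ V ⊕ V, ρ ≠ σ →
      ¬ iasColoop A ρ → ¬ iasColoop A σ →
      (∀ Bs, iasBasis A Bs → ρ ∈ Bs ∨ σ ∈ Bs) →
      ∃ u : V, (∀ z, z ≠ u → A z u = 0) ∧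
        ({ρ, σ} : Set (V ⊕ V ⊕ V)) =
          {Sum.inl u, if A u u = 0 then Sum.inr (Sum.inr u) else Sum.inr (Sum.inl u)}) :=
  series_elements_isolated_vertex_general A hA
end

section
/- Suppose two symmetric GF(2) matrices A and A′ indexed by the same set T₂ give 2-sheltering matroids Q(A) and Q(A′) via the representations (I | A) and (I | A′) with the same natural 2-partition τ = (T₁, T₂), and suppose the multimatroids Z(Q(A)) and Z(Q(A′)) coincide (have the same independent subtransversals). Then A = A′. -/
/-- Columns of the block matrix `E = (I | A)` over GF(2). -/
def iaCol {n : Type} [DecidableEq n] (A : Matrix n n (ZMod 2)) :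
    n ⊕ n → n → ZMod 2
  | Sum.inl i => fun w => if w = i then 1 else 0
  | Sum.inr j => fun w => A w j

/-- Independence of a set of columns of `(I | A)`. -/
def iaIndep {n : Type} [DecidableEq n] (A : Matrix n n (ZMod 2))
    (S : Set (n ⊕ n)) : Prop :=
  LinearIndependent (ZMod 2) (S.restrict (iaCol A))

/-!
An off-diagonal entry `x = A i j` of a symmetric GF(2) matrix can be read off the principal
`2 × 2` minor `A i i * A j j - x ^ 2 = A i i * A j j - x`, so `A` is determined by its principal
minors of orders one and two. A principal minor `det A[J]` is nonzero exactly when the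
transversal of `(I | A)` taking the `A`-columns in `J` and the identity columns outside `J`
is independent: projecting onto the coordinates in `J` kills the identity columns.
-/

open Set Function Matrix

section PrincipalMinor

variable {R : Type*} [Ring R] {m n : Type*} [Fintype m] [Fintype n] [DecidableEq n]

theorem sum_smul_single_apply {s : Set n} [DecidablePred (· ∈ s)] (d : s → R) (w : n) :
    (∑ k : s, d k • Pi.single (k : n) (1 : R)) w = if h : w ∈ s then d ⟨w, h⟩ else 0 := by
  simp only [Finset.sum_apply, Pi.smul_apply, Pi.single_apply, smul_eq_mul]
  split_ifs with h
  · rw [Finset.sum_eq_single ⟨w, h⟩] <;> simp +contextual [Subtype.ext_iff, eq_comm]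
  · exact Finset.sum_eq_zero fun k _ => by simp [show w ≠ k from fun hk => h (hk ▸ k.2)]

omit [Fintype n] [DecidableEq n] in
theorem sum_smul_col_submatrix (A : Matrix n n R) (f : m → n) (c : m → R) :
    ∑ a, c a • (A.submatrix f f).col a = (∑ a, c a • A.col (f a)) ∘ f := by
  ext b
  simp only [Finset.sum_apply, Pi.smul_apply, Function.comp_apply, col_apply, submatrix_apply]

theorem linearIndependent_sumElim_single_col_iff (A : Matrix n n R) (f : m → n)
    [DecidablePred (· ∈ range f)] :
    LinearIndependent R (Sum.elim (fun k : ↥(range f)ᶜ => Pi.single (k : n) (1 : R)) (A.col ∘ f))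
      ↔ LinearIndependent R (A.submatrix f f).col := by
  simp only [Fintype.linearIndependent_iff, Fintype.sum_sum_type, Sum.forall, Sum.elim_inl,
    Sum.elim_inr, Function.comp_apply, sum_smul_col_submatrix]
  constructor
  · intro H c hc
    refine (H (Sum.elim (fun k => -(∑ a, c a • A.col (f a)) k) c) ?_).2
    ext w
    rw [Pi.add_apply, sum_smul_single_apply, Pi.zero_apply]
    by_cases hw : w ∈ range f
    · obtain ⟨b, rfl⟩ := hw
      simpa using congrFun hc b
    · simp [hw]
  · intro H g hg
    have hc : ∀ a, g (Sum.inr a) = 0 := H _ <| funext fun b => by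
      have := congrFun hg (f b)
      rwa [Pi.add_apply, sum_smul_single_apply,
        dif_neg (show f b ∉ (range f)ᶜ from not_not_intro (mem_range_self b)), zero_add] at this
    refine ⟨fun k => ?_, hc⟩
    have := congrFun hg k
    simp only [hc, zero_smul, Finset.sum_const_zero, add_zero] at this
    rwa [sum_smul_single_apply, dif_pos k.2] at this

end PrincipalMinor

def principalTransversal {n : Type} (J : Set n) : Set (n ⊕ n) :=
  Sum.inl '' Jᶜ ∪ Sum.inr '' J

theorem principalTransversal_injOn {n : Type} (J : Set n) :
    InjOn (Sum.elim id id) (principalTransversal J) := by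
  rintro _ (⟨a, ha, rfl⟩ | ⟨a, ha, rfl⟩) _ (⟨b, hb, rfl⟩ | ⟨b, hb, rfl⟩) hab <;>
    simp_all

theorem iaIndep_principalTransversal_iff {m n : Type} [Fintype m] [DecidableEq m] [Fintype n]
    [DecidableEq n]
    (A : Matrix n n (ZMod 2)) {f : m → n} (hf : Injective f) :
    iaIndep A (principalTransversal (range f)) ↔ (A.submatrix f f).det ≠ 0 := by
  classical
  set g : ↥(range f)ᶜ ⊕ m → n ⊕ n := Sum.elim (Sum.inl ∘ (↑)) (Sum.inr ∘ f)
  have hg : Injective g :=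
    (Sum.inl_injective.comp Subtype.val_injective).sumElim (Sum.inr_injective.comp hf)
      (by simp)
  have hrange : range g = principalTransversal (range f) := by
    simp only [g, Set.Sum.elim_range, range_comp, Subtype.range_coe, principalTransversal]
  have hcol : iaCol A ∘ g = Sum.elim (fun k : ↥(range f)ᶜ => Pi.single (k : n) 1) (A.col ∘ f) := by
    ext (k | a) w <;> simp [g, iaCol, Pi.single_apply]
  change LinearIndepOn _ (iaCol A) _ ↔ _
  rw [← hrange, linearIndepOn_range_iff hg, hcol, linearIndependent_sumElim_single_col_iff,
    linearIndependent_cols_iff_isUnit, isUnit_iff_isUnit_det, isUnit_iff_ne_zero]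

theorem ZMod.two_eq_of_ne_zero_iff {a b : ZMod 2} (h : a ≠ 0 ↔ b ≠ 0) : a = b := by
  revert a b
  decide

theorem Matrix.eq_of_isSymm_of_det_submatrix_eq {n : Type} {A A' : Matrix n n (ZMod 2)}
    (hA : A.IsSymm) (hA' : A'.IsSymm)
    (h₁ : ∀ f : Fin 1 → n, (A.submatrix f f).det = (A'.submatrix f f).det)
    (h₂ : ∀ f : Fin 2 → n, Injective f → (A.submatrix f f).det = (A'.submatrix f f).det) :
    A = A' := by
  have hdiag (i : n) : A i i = A' i i := by
    simpa only [det_fin_one, submatrix_apply, Matrix.cons_val_zero] using h₁ ![i]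
  ext i j
  rcases eq_or_ne i j with rfl | hij
  · exact hdiag i
  · have hminor := h₂ ![i, j] (injective_pair_iff_ne.2 hij)
    simp only [det_fin_two, submatrix_apply, Matrix.cons_val_zero, Matrix.cons_val_one] at hminor
    rw [hA.apply i j, hA'.apply i j, hdiag i, hdiag j] at hminor
    have hidem (x : ZMod 2) : x * x = x := by rw [← sq, ZMod.pow_card]
    linear_combination hidem (A' i j) - hidem (A i j) - hminor

/-- Suppose symmetric GF(2) matrices `A` and `A'` give 2-sheltering matroids via the
representations `(I | A)` and `(I | A')` with the same natural 2-partition, and the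
associated multimatroids coincide (the same subtransversals are independent, where a
subtransversal is a set on which the block map `Sum.elim id id` is injective).
Then `A = A'`. -/
theorem strongly_binary_unique_sheltering {n : Type} [Fintype n] [DecidableEq n]
    (A A' : Matrix n n (ZMod 2)) (hA : A.IsSymm) (hA' : A'.IsSymm)
    (h : ∀ S : Set (n ⊕ n), Set.InjOn (Sum.elim id id) S →
      (iaIndep A S ↔ iaIndep A' S)) :
    A = A' := by
  have hminor {m : Type} [Fintype m] [DecidableEq m] (f : m → n) (hf : Injective f) :
      (A.submatrix f f).det = (A'.submatrix f f).det :=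
    ZMod.two_eq_of_ne_zero_iff <| by
      simpa only [iaIndep_principalTransversal_iff _ hf] using
        h _ (principalTransversal_injOn (range f))
  exact eq_of_isSymm_of_det_submatrix_eq hA hA' (fun f => hminor f (injective_of_subsingleton f))
    hminor
end
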